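/- Let T be a lower triangular r×r real matrix, and let Ī = {c+1,...,m} and J̄ ⊆ {c+1,...,r} with |J̄| = m−c. Then det(T_{Ī×{c+1,...,r}} · (T_{J̄×{c+1,...,r}})ᵀ) = det(T_{Ī×Ī}) · det(T_{J̄×Ī}). -/
import Mathlib

open Matrix Finset

theorem det_mul_transpose_lower_triangular {r m c : ℕ} (hc : c ≤ m) (hm : m ≤ r)
    (T : Matrix (Fin r) (Fin r) ℝ)
    (hlow : ∀ i j : Fin r, i < j → T i j = 0)
    (Jb : Finset (Fin r)) (hJbsub : ∀ j ∈ Jb, c ≤ (j : ℕ))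
    (hJb : Jb.card = m - c) :
    (T.submatrix (fun i : Fin (m - c) => (⟨c + (i : ℕ), by omega⟩ : Fin r))
          (fun k : Fin (r - c) => (⟨c + (k : ℕ), by omega⟩ : Fin r))
        * (T.submatrix (fun j : Fin (m - c) => Jb.orderEmbOfFin hJb j)
          (fun k : Fin (r - c) => (⟨c + (k : ℕ), by omega⟩ : Fin r)))ᵀ).det
      = (T.submatrix (fun i : Fin (m - c) => (⟨c + (i : ℕ), by omega⟩ : Fin r))
            (fun i : Fin (m - c) => (⟨c + (i : ℕ), by omega⟩ : Fin r))).det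
        * (T.submatrix (fun j : Fin (m - c) => Jb.orderEmbOfFin hJb j)
            (fun i : Fin (m - c) => (⟨c + (i : ℕ), by omega⟩ : Fin r))).det := by
  have key : (T.submatrix (fun i : Fin (m - c) => (⟨c + (i : ℕ), by omega⟩ : Fin r))
          (fun k : Fin (r - c) => (⟨c + (k : ℕ), by omega⟩ : Fin r))
        * (T.submatrix (fun j : Fin (m - c) => Jb.orderEmbOfFin hJb j)
          (fun k : Fin (r - c) => (⟨c + (k : ℕ), by omega⟩ : Fin r)))ᵀ)
      = (T.submatrix (fun i : Fin (m - c) => (⟨c + (i : ℕ), by omega⟩ : Fin r))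
            (fun i : Fin (m - c) => (⟨c + (i : ℕ), by omega⟩ : Fin r)))
        * (T.submatrix (fun j : Fin (m - c) => Jb.orderEmbOfFin hJb j)
            (fun i : Fin (m - c) => (⟨c + (i : ℕ), by omega⟩ : Fin r)))ᵀ := by
    ext i j
    simp only [mul_apply, transpose_apply, submatrix_apply]
    have hg : ∀ n : ℕ,
        (fun k : ℕ => if h : c + k < r then
            T ⟨c + (i : ℕ), by omega⟩ ⟨c + k, h⟩ *
            T (Jb.orderEmbOfFin hJb j) ⟨c + k, h⟩ else 0) = _ := fun n => rfl
    set g : ℕ → ℝ := fun k : ℕ => if h : c + k < r then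
        T ⟨c + (i : ℕ), by omega⟩ ⟨c + k, h⟩ *
        T (Jb.orderEmbOfFin hJb j) ⟨c + k, h⟩ else 0 with hgdef
    have h1 : ∑ k : Fin (r - c), T ⟨c + (i : ℕ), by omega⟩ ⟨c + (k : ℕ), by omega⟩ *
        T (Jb.orderEmbOfFin hJb j) ⟨c + (k : ℕ), by omega⟩ = ∑ k ∈ range (r - c), g k := by
      rw [← Fin.sum_univ_eq_sum_range]
      refine Finset.sum_congr rfl fun k _ => ?_
      simp only [hgdef, dif_pos (show c + (k : ℕ) < r by omega)]
    have h2 : ∑ k : Fin (m - c), T ⟨c + (i : ℕ), by omega⟩ ⟨c + (k : ℕ), by omega⟩ *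
        T (Jb.orderEmbOfFin hJb j) ⟨c + (k : ℕ), by omega⟩ = ∑ k ∈ range (m - c), g k := by
      rw [← Fin.sum_univ_eq_sum_range]
      refine Finset.sum_congr rfl fun k _ => ?_
      simp only [hgdef, dif_pos (show c + (k : ℕ) < r by omega)]
    rw [h1, h2]
    refine (Finset.sum_subset (Finset.range_subset_range.mpr (by omega)) fun k hk hk' => ?_).symm
    simp only [Finset.mem_range, not_lt] at hk hk'
    simp only [hgdef, dif_pos (show c + k < r by omega)]
    rw [hlow _ _ (show (⟨c + (i : ℕ), by omega⟩ : Fin r) < ⟨c + k, by omega⟩ by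
      simp [Fin.lt_def]; omega), zero_mul]
  rw [key, det_mul, det_transpose]
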